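/- Under Assumption 1, assume κ > 0, μ ≠ 0 and ε ≤ μ. Set p = diag(X_opt) for an optimal solution X_opt of P(A,r). Then each anchor T_j = {u : ||a_u − w_j||_1 ≤ 2μ} satisfies score(T_j, p) = Σ_{u∈T_j} p(u) ≥ 1 − 16ε/(κμ(1−ε)). -/

import Mathlib

/-! The pure columns of `A` give a feasible point of `P(A, r)` with residual at most `2ε`, so the
optimal residual is at most `2ε` as well. Read in the column `x` of `X_opt` at the pure column of
`w_j`, this says `w_j ≈ W y` with `y = H x`, up to an error `η ≤ 4ε / (1 - ε)`, and the definition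
of `κ` turns this into `κ (1 - y_j) ≤ η`. A column `u` outside the anchor `T_j` has
`H(j, u) ≤ 1 - (μ - ε/2)`, so `y_j` can only be close to `1` if `x` puts most of its mass on `T_j`;
the constraint `X(u, v) ≤ X(u, u)` moves that mass to the diagonal. If `μ - ε/2 ≥ 1`, every column
lies in `T_j` and the score is the trace `r`. -/

noncomputable section
open Matrix
open scoped Classical

/-- Entrywise L1 norm of a vector. -/
def l1 {α : Type*} [Fintype α] (v : α → ℝ) : ℝ := ∑ i, |v i|

/-- Induced L1 norm of a matrix (maximum column sum of absolute values). -/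
def ml1 {α β : Type*} [Fintype α] [Fintype β] (M : Matrix α β ℝ) : ℝ :=
  sSup (Set.range fun j => ∑ i, |M i j|)

/-- Feasible set of problem P(A,r). -/
def Feas {ι : Type*} [Fintype ι] [DecidableEq ι] (X : Matrix ι ι ℝ) (r : ℕ) : Prop :=
  Matrix.trace X = (r : ℝ) ∧ (∀ i, X i i ≤ 1) ∧ (∀ i j, 0 ≤ X i j) ∧
    (∀ i j, X i j ≤ X i i)

/-- κ(W) = min over j of min over nonnegative z (supported off j) of
    ‖w_j − W(:,R∖{j}) z‖₁. -/
def kappa {d r : ℕ} (W : Matrix (Fin d) (Fin r) ℝ) : ℝ :=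
  sInf {c | ∃ (j : Fin r) (z : Fin r → ℝ), (∀ k, 0 ≤ z k) ∧ z j = 0 ∧
    c = l1 (fun i => W i j - ∑ k, W i k * z k)}

/-- ω(W) = min over distinct pairs of ‖w_{j₁} − w_{j₂}‖₁. -/
def omegaW {d r : ℕ} (W : Matrix (Fin d) (Fin r) ℝ) : ℝ :=
  sInf {c | ∃ j₁ j₂ : Fin r, j₁ ≠ j₂ ∧ c = l1 (fun i => W i j₁ - W i j₂)}

/-- β = maximum entry of H̄. -/
def betaH {r m : ℕ} (Hb : Matrix (Fin r) (Fin m) ℝ) : ℝ :=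
  sSup (Set.range fun p : Fin r × Fin m => Hb p.1 p.2)

section L1
variable {α : Type*} [Fintype α]

lemma l1_eq_norm (v : α → ℝ) : l1 v = ‖WithLp.toLp 1 v‖ := by
  simp [l1, PiLp.norm_eq_of_L1]

lemma l1_nonneg (v : α → ℝ) : 0 ≤ l1 v := by
  rw [l1_eq_norm]; exact norm_nonneg _

lemma l1_of_nonneg {v : α → ℝ} (hv : ∀ i, 0 ≤ v i) : l1 v = ∑ i, v i :=
  Finset.sum_congr rfl fun i _ => abs_of_nonneg (hv i)

lemma l1_add_le (v w : α → ℝ) : l1 (v + w) ≤ l1 v + l1 w := by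
  simpa only [l1_eq_norm, WithLp.toLp_add] using norm_add_le _ _

lemma l1_sub_le (v w : α → ℝ) : l1 (v - w) ≤ l1 v + l1 w := by
  simpa only [l1_eq_norm, WithLp.toLp_sub] using norm_sub_le _ _

lemma l1_le_l1_add_l1_sub (v w : α → ℝ) : l1 w ≤ l1 v + l1 (v - w) := by
  simpa only [l1_eq_norm, WithLp.toLp_sub] using norm_le_norm_add_norm_sub (WithLp.toLp 1 v) _

lemma l1_add_sub_le {u v w : α → ℝ} {ε : ℝ} (hu : l1 u = 1) (hv : l1 v ≤ ε) (hw : l1 w = 1) :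
    l1 (u + v - w) ≤ 2 + ε := by
  linarith [l1_sub_le (u + v) w, l1_add_le u v]

lemma l1_smul (c : ℝ) (v : α → ℝ) : l1 (c • v) = |c| * l1 v := by
  simp only [l1_eq_norm, WithLp.toLp_smul, norm_smul, Real.norm_eq_abs]

lemma le_one_of_l1_eq_one {v : α → ℝ} (hv : ∀ i, 0 ≤ v i) (hv1 : l1 v = 1) (i : α) : v i ≤ 1 :=
  calc v i ≤ ∑ k, v k := Finset.single_le_sum (fun k _ => hv k) (Finset.mem_univ i)
    _ = 1 := (l1_of_nonneg hv).symm.trans hv1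

lemma l1_sub_single_eq [DecidableEq α] {h : α → ℝ} (hh : ∀ k, 0 ≤ h k) (hh1 : l1 h = 1)
    (j : α) : l1 (h - Pi.single j 1) = 2 * (1 - h j) := by
  have hsum : ∑ k, h k = 1 := by rw [← l1_of_nonneg hh, hh1]
  have hterm : ∀ k, |h k - (Pi.single j 1 : α → ℝ) k| =
      h k + (Pi.single j 1 : α → ℝ) k - 2 * (Pi.single j (h j) : α → ℝ) k := by
    intro k
    rcases eq_or_ne k j with rfl | hk
    · simp only [Pi.single_eq_same, abs_of_nonpos (sub_nonpos.2 (le_one_of_l1_eq_one hh hh1 k)),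
        neg_sub]
      ring
    · simp [hk, abs_of_nonneg (hh k)]
  simp only [l1, Pi.sub_apply, hterm, Finset.sum_sub_distrib, Finset.sum_add_distrib, hsum,
    ← Finset.mul_sum, Finset.sum_pi_single', Finset.mem_univ, if_true]
  ring

end L1

namespace Matrix
variable {α β γ : Type*}

lemma col_add (M N : Matrix α β ℝ) (j : β) : (M + N).col j = M.col j + N.col j := rfl

lemma col_sub (M N : Matrix α β ℝ) (j : β) : (M - N).col j = M.col j - N.col j := rfl

lemma col_mul [Fintype β] (M : Matrix α β ℝ) (H : Matrix β γ ℝ) (u : γ) :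
    (M * H).col u = M *ᵥ H.col u := rfl

end Matrix

section ML1
variable {α β : Type*} [Fintype α] [Fintype β]

lemma l1_col_le_ml1 (M : Matrix α β ℝ) (j : β) : l1 (M.col j) ≤ ml1 M :=
  le_csSup (Set.finite_range _).bddAbove (Set.mem_range_self j)

lemma ml1_nonneg (M : Matrix α β ℝ) : 0 ≤ ml1 M :=
  Real.sSup_nonneg (by rintro _ ⟨j, rfl⟩; exact l1_nonneg _)

lemma ml1_le {M : Matrix α β ℝ} {c : ℝ} (hc : 0 ≤ c) (h : ∀ j, l1 (M.col j) ≤ c) : ml1 M ≤ c :=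
  Real.sSup_le (by rintro _ ⟨j, rfl⟩; exact h j) hc

lemma l1_mulVec_le (M : Matrix α β ℝ) (v : β → ℝ) : l1 (M *ᵥ v) ≤ ml1 M * l1 v :=
  calc l1 (M *ᵥ v) ≤ ∑ i, ∑ k, |M i k| * |v k| :=
        Finset.sum_le_sum fun i _ => (Finset.abs_sum_le_sum_abs _ _).trans_eq (by simp [abs_mul])
    _ = ∑ k, l1 (M.col k) * |v k| := by rw [Finset.sum_comm]; simp [l1, Finset.sum_mul]
    _ ≤ ∑ k, ml1 M * |v k| := by gcongr with k; exact l1_col_le_ml1 M k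
    _ = ml1 M * l1 v := (Finset.mul_sum _ _ _).symm

lemma l1_mulVec_of_nonneg {M : Matrix α β ℝ} {v : β → ℝ} (hM : ∀ i j, 0 ≤ M i j)
    (hcol : ∀ j, l1 (M.col j) = 1) (hv : ∀ j, 0 ≤ v j) : l1 (M *ᵥ v) = l1 v := by
  have hsum : ∀ j, ∑ i, M i j = 1 := fun j =>
    (l1_of_nonneg (v := M.col j) (hM · j)).symm.trans (hcol j)
  rw [l1_of_nonneg (v := M *ᵥ v) fun i => Finset.sum_nonneg fun j _ => mul_nonneg (hM i j) (hv j),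
    l1_of_nonneg hv]
  simp only [mulVec, dotProduct]
  rw [Finset.sum_comm]
  simp [← Finset.sum_mul, hsum]

lemma l1_mulVec_sub_col_le [DecidableEq β] {W : Matrix α β ℝ} (hW : ∀ k, l1 (W.col k) = 1)
    {h : β → ℝ} (hh : ∀ k, 0 ≤ h k) (hh1 : l1 h = 1) (j : β) :
    l1 (W *ᵥ h - W.col j) ≤ 2 * (1 - h j) := by
  rw [← mulVec_single_one, ← mulVec_sub, ← one_mul (2 * (1 - h j)), ← l1_sub_single_eq hh hh1 j]
  exact (l1_mulVec_le _ _).trans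
    (mul_le_mul_of_nonneg_right (ml1_le zero_le_one fun k => (hW k).le) (l1_nonneg _))

end ML1

section Kappa
variable {d r : ℕ} (W : Matrix (Fin d) (Fin r) ℝ)

lemma kappa_nonneg : 0 ≤ kappa W :=
  Real.sInf_nonneg (by rintro _ ⟨j, z, -, -, rfl⟩; exact l1_nonneg _)

lemma kappa_le {j : Fin r} {z : Fin r → ℝ} (hz : ∀ k, 0 ≤ z k) (hzj : z j = 0) :
    kappa W ≤ l1 (W.col j - W *ᵥ z) :=
  csInf_le ⟨0, by rintro _ ⟨j, z, -, -, rfl⟩; exact l1_nonneg _⟩ ⟨j, z, hz, hzj, rfl⟩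

lemma kappa_le_l1_col (j : Fin r) : kappa W ≤ l1 (W.col j) := by
  simpa using kappa_le W (z := 0) (fun _ => le_rfl) rfl (j := j)

lemma kappa_mul_one_sub_le {y : Fin r → ℝ} (hy : ∀ k, 0 ≤ y k) (j : Fin r) :
    kappa W * (1 - y j) ≤ l1 (W.col j - W *ᵥ y) := by
  rcases le_or_gt (1 - y j) 0 with ht | ht
  · exact (mul_nonpos_of_nonneg_of_nonpos (kappa_nonneg W) ht).trans (l1_nonneg _)
  set t := 1 - y j
  -- rescaling the part of `y` off `j` gives an admissible point for `kappa`
  set z := t⁻¹ • (y - Pi.single j (y j))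
  have hz : ∀ k, 0 ≤ z k := by
    intro k
    rcases eq_or_ne k j with rfl | hk
    · simp [z]
    · simpa [z, hk] using mul_nonneg (inv_nonneg.2 ht.le) (hy k)
  have hWz : W.col j - W *ᵥ z = t⁻¹ • (W.col j - W *ᵥ y) := by
    have ht' : t⁻¹ * t = 1 := inv_mul_cancel₀ ht.ne'
    simp only [z, mulVec_smul, mulVec_sub, mulVec_single, op_smul_eq_smul]
    linear_combination (norm := module) -(ht' • W.col j)
  have := kappa_le W hz (j := j) (by simp [z])
  rw [hWz, l1_smul, abs_of_pos (inv_pos.2 ht), le_inv_mul_iff₀ ht] at this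
  linarith

end Kappa

section Selection
variable {α ρ ι : Type*} [DecidableEq ι] {p : ρ → ι}

lemma mul_one_submatrix_id [Fintype ι] (A : Matrix α ι ℝ) (p : ρ → ι) :
    A * (1 : Matrix ι ι ℝ).submatrix id p = A.submatrix id p := by
  simpa using mul_submatrix_one (Equiv.refl ι) p A

variable [Fintype ρ]

lemma one_submatrix_mul_apply_self (hp : p.Injective) (H : Matrix ρ ι ℝ) (k : ρ) (u : ι) :
    ((1 : Matrix ι ι ℝ).submatrix id p * H) (p k) u = H k u := by
  simp [mul_apply, one_apply, hp.eq_iff]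

lemma one_submatrix_mul_apply_of_notMem (H : Matrix ρ ι ℝ) {v : ι} (hv : v ∉ Set.range p)
    (u : ι) : ((1 : Matrix ι ι ℝ).submatrix id p * H) v u = 0 := by
  refine Finset.sum_eq_zero fun k _ => ?_
  simp only [submatrix_apply, id, one_apply, ite_mul, one_mul, zero_mul]
  exact if_neg fun h => hv ⟨k, h.symm⟩

lemma feas_one_submatrix_mul [Fintype ι] [DecidableEq ρ] (hp : p.Injective) {H : Matrix ρ ι ℝ}
    (hH0 : ∀ k u, 0 ≤ H k u) (hH1 : ∀ k u, H k u ≤ 1) (hpure : H.submatrix id p = 1) :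
    Feas ((1 : Matrix ι ι ℝ).submatrix id p * H) (Fintype.card ρ) := by
  have hdiag : ∀ k, H k (p k) = 1 := fun k => by simpa using congr_fun₂ hpure k k
  refine ⟨by rw [trace_mul_comm, mul_one_submatrix_id, hpure, trace_one], ?_, ?_, ?_⟩ <;>
    intro v <;> by_cases hv : v ∈ Set.range p
  all_goals first
    | obtain ⟨k, rfl⟩ := hv; simp [one_submatrix_mul_apply_self hp, hdiag, hH0, hH1]
    | simp [one_submatrix_mul_apply_of_notMem H hv]

end Selection

lemma sum_mul_le_of_le_one_of_le_off {ι : Type*} [Fintype ι] (T : ι → Prop) [DecidablePred T]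
    {h x : ι → ℝ} {c : ℝ} (hx : ∀ u, 0 ≤ x u) (h1 : ∀ u, h u ≤ 1) (hc : ∀ u, ¬ T u → h u ≤ c) :
    ∑ u, h u * x u ≤
      ∑ u, (if T u then x u else 0) + c * (∑ u, x u - ∑ u, if T u then x u else 0) := by
  have hterm : ∀ u, h u * x u ≤ (if T u then x u else 0) + c * (x u - if T u then x u else 0) := by
    intro u
    split_ifs with hu
    · simpa using mul_le_of_le_one_left (hx u) (h1 u)
    · simpa using mul_le_mul_of_nonneg_right (hc u hu) (hx u)
  refine (Finset.sum_le_sum fun u _ => hterm u).trans_eq ?_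
  rw [Finset.sum_add_distrib, ← Finset.mul_sum, Finset.sum_sub_distrib]

lemma score_bound_of_estimates {κ μ ε η s y P : ℝ} (hκ0 : 0 < κ) (hκ1 : κ ≤ 1) (hε0 : 0 ≤ ε)
    (hε1 : ε < 1) (hεμ : ε ≤ μ) (hμ : 0 < μ) (hq : μ - ε / 2 < 1) (hη0 : 0 ≤ η)
    (hy : κ * (1 - y) ≤ η) (hs : s ≤ 1 + η) (hη : η ≤ 3 * ε + ε * s)
    (hyP : y ≤ P + (1 - (μ - ε / 2)) * (s - P)) :
    1 - 16 * ε / (κ * μ * (1 - ε)) ≤ P := by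
  set q := μ - ε / 2 with hq_def
  have hq0 : 0 < q := by linarith
  have hη4 : η * (1 - ε) ≤ 4 * ε := by nlinarith [mul_le_mul_of_nonneg_left hs hε0]
  have hcore : κ * μ * (1 - P) ≤ 4 * η := by
    rcases le_or_gt P 1 with hP | hP
    · have h1 : q * (1 - P) ≤ (1 - y) + (1 - q) * η := by
        nlinarith [mul_le_mul_of_nonneg_left (show s - 1 ≤ η by linarith)
          (show 0 ≤ 1 - q by linarith)]
      have h2 : κ * (1 - q) * η ≤ η := mul_le_of_le_one_left hη0 (by nlinarith)
      have h3 : κ * (q * (1 - P)) ≤ 2 * η := by nlinarith [mul_le_mul_of_nonneg_left h1 hκ0.le]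
      nlinarith [mul_le_mul_of_nonneg_left (show μ ≤ 2 * q by linarith)
        (mul_nonneg hκ0.le (sub_nonneg.2 hP))]
    · nlinarith [mul_pos hκ0 hμ]
  rw [sub_le_comm, le_div_iff₀ (by positivity)]
  nlinarith [mul_le_mul_of_nonneg_right hcore (show 0 ≤ 1 - ε by linarith)]

lemma fromCols_one_nonneg {ρ κ : Type*} [DecidableEq ρ] {Hbar : Matrix ρ κ ℝ}
    (hHbar : ∀ i j, 0 ≤ Hbar i j) (k : ρ) (v : ρ ⊕ κ) :
    0 ≤ fromCols (1 : Matrix ρ ρ ℝ) Hbar k v := by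
  cases v with
  | inl l => rw [fromCols_apply_inl, one_apply]; split_ifs <;> norm_num
  | inr l => exact hHbar k l

section Factorization
variable {α ρ ι : Type*} [Fintype ρ] [DecidableEq ρ]
  {W : Matrix α ρ ℝ} {H : Matrix ρ ι ℝ} {N : Matrix α ι ℝ} {p : ρ → ι} {ε : ℝ}

lemma add_mul_submatrix_id_eq (hpure : H.submatrix id p = 1) :
    (W * H + N).submatrix id p = W + N.submatrix id p := by
  have hHp : ∀ l k, H l (p k) = (1 : Matrix ρ ρ ℝ) l k := fun l k => congr_fun₂ hpure l k
  ext i k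
  simp [mul_apply, hHp, one_apply]

lemma col_add_mul_eq (hpure : H.submatrix id p = 1) (j : ρ) :
    (W * H + N).col (p j) = W.col j + N.col (p j) := by
  change ((W * H + N).submatrix id p).col j = _
  rw [add_mul_submatrix_id_eq hpure]
  rfl

variable [Fintype α] [Fintype ι]

lemma ml1_sub_mul_one_submatrix_mul_le [DecidableEq ι] (hpure : H.submatrix id p = 1)
    (hHcol : ∀ u, l1 (H.col u) ≤ 1) (hN : ml1 N ≤ ε) :
    ml1 (W * H + N - (W * H + N) * ((1 : Matrix ι ι ℝ).submatrix id p * H)) ≤ 2 * ε := by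
  have hε : 0 ≤ ε := (ml1_nonneg N).trans hN
  have hNp : ml1 (N.submatrix id p) ≤ ε :=
    (ml1_le (ml1_nonneg N) fun k => l1_col_le_ml1 N (p k)).trans hN
  rw [← Matrix.mul_assoc, mul_one_submatrix_id, add_mul_submatrix_id_eq hpure, Matrix.add_mul,
    add_sub_add_left_eq_sub]
  refine ml1_le (by linarith) fun u => ?_
  rw [col_sub, col_mul]
  calc l1 (N.col u - N.submatrix id p *ᵥ H.col u)
      ≤ l1 (N.col u) + l1 (N.submatrix id p *ᵥ H.col u) := l1_sub_le _ _
    _ ≤ ε + ε * 1 := add_le_add ((l1_col_le_ml1 N u).trans hN)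
        ((l1_mulVec_le _ _).trans (mul_le_mul hNp (hHcol u) (l1_nonneg _) hε))
    _ = 2 * ε := by ring

lemma l1_col_sub_mulVec_le (hpure : H.submatrix id p = 1) (hN : ml1 N ≤ ε)
    {X : Matrix ι ι ℝ} {b : ℝ} (hX : ml1 (W * H + N - (W * H + N) * X) ≤ b) (j : ρ) :
    l1 (W.col j - W *ᵥ (H *ᵥ X.col (p j))) ≤ b + ε + ε * l1 (X.col (p j)) := by
  have hsplit : W.col j - W *ᵥ (H *ᵥ X.col (p j)) =
      (W * H + N - (W * H + N) * X).col (p j) - N.col (p j) + N *ᵥ X.col (p j) := by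
    rw [col_sub, col_mul, col_add_mul_eq hpure, add_mulVec, mulVec_mulVec]
    abel
  rw [hsplit]
  refine (l1_add_le _ _).trans (add_le_add ((l1_sub_le _ _).trans (add_le_add ?_ ?_)) ?_)
  · exact (l1_col_le_ml1 _ _).trans hX
  · exact (l1_col_le_ml1 _ _).trans hN
  · exact (l1_mulVec_le _ _).trans (mul_le_mul_of_nonneg_right hN (l1_nonneg _))

lemma le_one_sub_of_far (hWcol : ∀ k, l1 (W.col k) = 1) (hH0 : ∀ k u, 0 ≤ H k u)
    (hHcol : ∀ u, l1 (H.col u) = 1) (hN : ml1 N ≤ ε) {μ : ℝ} {j : ρ} {u : ι}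
    (hfar : ¬ l1 ((W * H + N).col u - W.col j) ≤ 2 * μ) : H j u ≤ 1 - (μ - ε / 2) := by
  have hsplit : (W * H + N).col u - W.col j = (W *ᵥ H.col u - W.col j) + N.col u := by
    rw [col_add, col_mul]
    abel
  have := (l1_add_le _ _).trans (add_le_add
    (l1_mulVec_sub_col_le hWcol (h := H.col u) (hH0 · u) (hHcol u) j)
    ((l1_col_le_ml1 N u).trans hN))
  rw [hsplit] at hfar
  rw [col_apply] at this
  linarith

end Factorization

lemma one_sub_le_anchor_mass {d r : ℕ} {ι : Type*} [Fintype ι] {W : Matrix (Fin d) (Fin r) ℝ}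
    {H : Matrix (Fin r) ι ℝ} {N : Matrix (Fin d) ι ℝ} {X : Matrix ι ι ℝ} {p : Fin r → ι}
    {ε μ : ℝ} (hW : ∀ i k, 0 ≤ W i k) (hWcol : ∀ k, l1 (W.col k) = 1) (hH0 : ∀ k u, 0 ≤ H k u)
    (hHcol : ∀ u, l1 (H.col u) = 1) (hpure : H.submatrix id p = 1) (hN : ml1 N ≤ ε)
    (hε1 : ε < 1) (hεμ : ε ≤ μ) (hμ : 0 < μ) (hq : μ - ε / 2 < 1) (hκ : 0 < kappa W)
    (hX : ml1 (W * H + N - (W * H + N) * X) ≤ 2 * ε) (j : Fin r) (hx : ∀ u, 0 ≤ X u (p j)) :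
    1 - 16 * ε / (kappa W * μ * (1 - ε)) ≤
      ∑ u, if l1 (fun k => (W * H + N) k u - W k j) ≤ 2 * μ then X u (p j) else 0 := by
  set x := X.col (p j)
  replace hx : ∀ u, 0 ≤ x u := hx
  have hy : ∀ k, 0 ≤ (H *ᵥ x) k := fun k =>
    Finset.sum_nonneg (s := Finset.univ) fun u _ => mul_nonneg (hH0 k u) (hx u)
  have hs : l1 x ≤ 1 + l1 (W.col j - W *ᵥ (H *ᵥ x)) := by
    rw [← l1_mulVec_of_nonneg hH0 hHcol hx, ← l1_mulVec_of_nonneg hW hWcol hy, ← hWcol j]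
    exact l1_le_l1_add_l1_sub _ _
  have hyP := sum_mul_le_of_le_one_of_le_off
    (fun u => l1 (fun k => (W * H + N) k u - W k j) ≤ 2 * μ) (h := fun u => H j u) hx
    (fun u => le_one_of_l1_eq_one (v := H.col u) (hH0 · u) (hHcol u) j)
    fun u hu => le_one_sub_of_far (j := j) (u := u) hWcol hH0 hHcol hN hu
  rw [← l1_of_nonneg hx] at hyP
  exact score_bound_of_estimates hκ ((kappa_le_l1_col W j).trans_eq (hWcol j))
    ((ml1_nonneg N).trans hN) hε1 hεμ hμ hq (l1_nonneg _) (kappa_mul_one_sub_le W hy j) hs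
    (by linarith [l1_col_sub_mulVec_le hpure hN hX j]) hyP

/-- Score of each anchor: score(T_j, p) ≥ 1 − 16ε/(κμ(1−ε)). -/
theorem anchor_score_bound
    {d r m : ℕ} (W : Matrix (Fin d) (Fin r) ℝ) (Hbar : Matrix (Fin r) (Fin m) ℝ)
    (σ : Equiv.Perm (Fin r ⊕ Fin m))
    (N A V : Matrix (Fin d) (Fin r ⊕ Fin m) ℝ)
    (H : Matrix (Fin r) (Fin r ⊕ Fin m) ℝ) (ε : ℝ)
    (hW : ∀ i j, 0 ≤ W i j) (hHbar : ∀ i j, 0 ≤ Hbar i j)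
    (hH : H = fun j u => Matrix.fromCols (1 : Matrix (Fin r) (Fin r) ℝ) Hbar j (σ u))
    (hV : V = W * H) (hA : A = V + N)
    (hVcol : ∀ u, l1 (fun i => V i u) = 1)
    (hWcol : ∀ j, l1 (fun i => W i j) = 1)
    (hHcol : ∀ u, l1 (fun j => H j u) = 1)
    (hε0 : 0 ≤ ε) (hε1 : ε < 1) (hN : ml1 N ≤ ε)
    (Xopt : Matrix (Fin r ⊕ Fin m) (Fin r ⊕ Fin m) ℝ)
    (hfeas : Feas Xopt r)
    (hopt : ∀ X : Matrix (Fin r ⊕ Fin m) (Fin r ⊕ Fin m) ℝ,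
      Feas X r → ml1 (A - A * Xopt) ≤ ml1 (A - A * X))
    (μ : ℝ) (hκ : 0 < kappa W) (hμ : μ ≠ 0) (hεμ : ε ≤ μ) :
    ∀ j : Fin r,
      1 - 16 * ε / (kappa W * μ * (1 - ε)) ≤
        ∑ u, (if l1 (fun k => A k u - W k j) ≤ 2 * μ then Xopt u u else 0) := by
  intro j
  subst hV hA
  obtain ⟨htr, -, hX0, hXdiag⟩ := hfeas
  set p : Fin r → Fin r ⊕ Fin m := fun k => σ.symm (Sum.inl k)
  have hH0 : ∀ k u, 0 ≤ H k u := fun k u => hH ▸ fromCols_one_nonneg hHbar k (σ u)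
  have hpure : H.submatrix id p = 1 := by
    ext k l
    rw [submatrix_apply, hH]
    simp [p]
  have hfeasX := feas_one_submatrix_mul (σ.symm.injective.comp Sum.inl_injective) hH0
    (fun k u => le_one_of_l1_eq_one (hH0 · u) (hHcol u) k) hpure
  rw [Fintype.card_fin] at hfeasX
  have hres : ml1 (W * H + N - (W * H + N) * Xopt) ≤ 2 * ε :=
    (hopt _ hfeasX).trans (ml1_sub_mul_one_submatrix_mul_le hpure (fun u => (hHcol u).le) hN)
  have hμ0 : 0 < μ := lt_of_le_of_ne (hε0.trans hεμ) (Ne.symm hμ)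
  by_cases hq : 1 ≤ μ - ε / 2
  · have hall : ∀ u, l1 (fun k => (W * H + N) k u - W k j) ≤ 2 * μ := fun u =>
      (l1_add_sub_le (hVcol u) ((l1_col_le_ml1 N u).trans hN) (hWcol j)).trans (by linarith)
    have hB : 0 ≤ 16 * ε / (kappa W * μ * (1 - ε)) := by positivity
    simp only [hall, if_true]
    change _ ≤ Xopt.trace
    rw [htr]
    linarith [show (1 : ℝ) ≤ r by exact_mod_cast j.pos]
  · exact (one_sub_le_anchor_mass hW hWcol hH0 hHcol hpure hN hε1 hεμ hμ0 (not_le.1 hq) hκ hres j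
      (hX0 · (p j))).trans
      (Finset.sum_le_sum fun u _ => by split_ifs; exacts [hXdiag u (p j), le_rfl])
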